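/- In a bi-gyrogroupoid B with unique inverses denoted ⊖, the left cancellation law ⊖rgyr[a,b](a)⊕(a⊕b) = b and the right cancellation law (a⊕b)⊖lgyr[a,b](b) = a hold for all a, b ∈ B. -/

import Mathlib

/-!
Instantiating the bi-gyroassociative law at `(⊖a, a, b)` and at `(a, b, ⊖b)`, the outer
gyrations become `lgyr[⊖a, a]` and `rgyr[b, ⊖b]`, which the reduction axioms (BG4) turn into
gyrations with second argument `0`, hence trivial by (BG5). This gives
`rgyr[a,b](⊖a) ⊕ (a ⊕ b) = b` and `(a ⊕ b) ⊕ lgyr[a,b](⊖b) = a`; since gyrations are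
automorphisms they commute with `⊖`.
-/

/-- A bi-gyrogroupoid: a set `β` with a binary operation `add`, an identity `zero`,
and two families of gyrations `lgyr`, `rgyr` satisfying axioms (BG1)–(BG5). -/
structure IsBiGyrogroupoid {β : Type*} (add : β → β → β) (zero : β)
    (lgyr rgyr : β → β → β → β) : Prop where
  /-- (BG1) `zero` is a two-sided identity. -/
  zero_add : ∀ a, add zero a = a
  add_zero : ∀ a, add a zero = a
  /-- (BG2) every element has a left inverse. -/
  exists_left_inv : ∀ a, ∃ b, add b a = zero
  /-- (BG3) gyrations are automorphisms of `(β, add)`. -/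
  lgyr_bijective : ∀ a b, Function.Bijective (lgyr a b)
  rgyr_bijective : ∀ a b, Function.Bijective (rgyr a b)
  lgyr_add : ∀ a b x y, lgyr a b (add x y) = add (lgyr a b x) (lgyr a b y)
  rgyr_add : ∀ a b x y, rgyr a b (add x y) = add (rgyr a b x) (rgyr a b y)
  /-- (BG3) the bi-gyroassociative law. -/
  bgassoc : ∀ a b c, add (add a b) (lgyr a b c) = add (rgyr b c a) (add b c)
  /-- (BG4a) -/
  rgyr_red : ∀ a b, rgyr a b = rgyr (lgyr a b a) (add a b)
  /-- (BG4b) -/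
  lgyr_red : ∀ a b, lgyr a b = lgyr (lgyr a b a) (add a b)
  /-- (BG5) -/
  lgyr_zero : ∀ a, lgyr a zero = id
  rgyr_zero : ∀ a, rgyr a zero = id

namespace IsBiGyrogroupoid

variable {β : Type*} {add : β → β → β} {zero : β} {lgyr rgyr : β → β → β → β}
  (h : IsBiGyrogroupoid add zero lgyr rgyr)
include h

theorem lgyr_eq_id_of_add_eq_zero {a b : β} (hab : add a b = zero) : lgyr a b = id := by
  rw [h.lgyr_red, hab, h.lgyr_zero]

theorem rgyr_eq_id_of_add_eq_zero {a b : β} (hab : add a b = zero) : rgyr a b = id := by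
  rw [h.rgyr_red, hab, h.rgyr_zero]

theorem rgyr_add_add_of_add_eq_zero {a c : β} (hca : add c a = zero) (b : β) :
    add (rgyr a b c) (add a b) = b := by
  rw [← h.bgassoc, hca, h.zero_add, h.lgyr_eq_id_of_add_eq_zero hca, id]

theorem add_add_lgyr_of_add_eq_zero {b c : β} (hbc : add b c = zero) (a : β) :
    add (add a b) (lgyr a b c) = a := by
  rw [h.bgassoc, hbc, h.add_zero, h.rgyr_eq_id_of_add_eq_zero hbc, id]

theorem left_inv_eq_right_inv {c d u : β} (hdc : add d c = zero) (hcu : add c u = zero) :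
    d = u := by
  have := h.rgyr_add_add_of_add_eq_zero hdc u
  rwa [h.rgyr_eq_id_of_add_eq_zero hcu, hcu, id, h.add_zero] at this

theorem map_zero_of_surjective {f : β → β} (hf : Function.Surjective f)
    (hadd : ∀ x y, f (add x y) = add (f x) (f y)) : f zero = zero := by
  obtain ⟨y, hy⟩ := hf zero
  have := hadd zero y
  rwa [h.zero_add, hy, h.add_zero, eq_comm] at this

theorem map_neg_of_surjective {neg : β → β}
    (hneg : ∀ a, add (neg a) a = zero ∧ add a (neg a) = zero) {f : β → β}
    (hf : Function.Surjective f) (hadd : ∀ x y, f (add x y) = add (f x) (f y)) (c : β) :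
    f (neg c) = neg (f c) :=
  (h.left_inv_eq_right_inv (hneg (f c)).1 <| by
    rw [← hadd, (hneg c).2, h.map_zero_of_surjective hf hadd]).symm

end IsBiGyrogroupoid

/-- The left and right cancellation laws in a bi-gyrogroupoid, where `neg a` is
the (unique) two-sided inverse of `a`. -/
theorem biGyrogroupoid_cancellation {β : Type*} (add : β → β → β) (zero : β)
    (lgyr rgyr : β → β → β → β) (neg : β → β)
    (h : IsBiGyrogroupoid add zero lgyr rgyr)
    (hneg : ∀ a, add (neg a) a = zero ∧ add a (neg a) = zero) :
    ∀ a b, add (neg (rgyr a b a)) (add a b) = b ∧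
      add (add a b) (neg (lgyr a b b)) = a := by
  intro a b
  have rgyr_neg := h.map_neg_of_surjective hneg (h.rgyr_bijective a b).2 (h.rgyr_add a b) a
  have lgyr_neg := h.map_neg_of_surjective hneg (h.lgyr_bijective a b).2 (h.lgyr_add a b) b
  constructor
  · rw [← rgyr_neg]
    exact h.rgyr_add_add_of_add_eq_zero (hneg a).1 b
  · rw [← lgyr_neg]
    exact h.add_add_lgyr_of_add_eq_zero (hneg b).2 a
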